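/- arXiv:2303.11431 — 3 statements merged into one kernel-verified Lean document; each statement's English description precedes it below -/
import Mathlib

section
/- In an effect algebra satisfying the ACC, for all a,b,c: if a ⊙ b is defined, then a ⊙ b ≤ c if and only if there exists d ∈ (b → c) with a ≤ d (adjointness between ⊙ and the unsharp implication →). -/
structure EffectAlgebra (E : Type*) where
  add : E → E → Option E
  zero : E
  one : E
  supp : E → E
  comm : ∀ a b, add a b = add b a
  assoc : ∀ a b c ab abc, add a b = some ab → add ab c = some abc →
    ∃ bc, add b c = some bc ∧ add a bc = some abc
  add_supp : ∀ a, add a (supp a) = some one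
  supp_unique : ∀ a b, add a b = some one → b = supp a
  one_def : ∀ a b, add a one = some b → a = zero

namespace EffectAlgebra

variable {E : Type*}

/-- induced order: a ≤ b iff ∃ c, a+c = b -/
def le (A : EffectAlgebra E) (a b : E) : Prop := ∃ c, A.add a c = some b

/-- a ⊙ b := (a'+b')' -/
def dot (A : EffectAlgebra E) (a b : E) : Option E :=
  (A.add (A.supp a) (A.supp b)).map A.supp

/-- ascending chain condition: every ascending sequence repeats -/
def ACC (A : EffectAlgebra E) : Prop :=
  ∀ f : ℕ → E, (∀ n, A.le (f n) (f (n + 1))) → ∃ n, f n = f (n + 1)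

/-- {x | x ⊙ b defined and x ⊙ b ≤ c} -/
def impSet (A : EffectAlgebra E) (b c : E) : Set E :=
  {x | ∃ d, A.dot x b = some d ∧ A.le d c}

/-- unsharp implication b → c := Max of impSet -/
def arrow (A : EffectAlgebra E) (b c : E) : Set E :=
  {x | x ∈ A.impSet b c ∧ ∀ y ∈ A.impSet b c, A.le x y → x = y}

/-- common lower bounds -/
def lb (A : EffectAlgebra E) (a b : E) : Set E :=
  {x | A.le x a ∧ A.le x b}

/-- Max L(a,b) -/
def maxLb (A : EffectAlgebra E) (a b : E) : Set E :=
  {x | x ∈ A.lb a b ∧ ∀ y ∈ A.lb a b, A.le x y → x = y}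

/-- a ⇒ b := a' + Max L(a,b) elementwise -/
def darr (A : EffectAlgebra E) (a b : E) : Set E :=
  {e | ∃ d ∈ A.maxLb a b, A.add (A.supp a) d = some e}

end EffectAlgebra

namespace EffectAlgebra

variable {E : Type*} (A : EffectAlgebra E)

lemma supp_supp (a : E) : A.supp (A.supp a) = a := by
  have h := A.add_supp a
  rw [A.comm] at h
  exact (A.supp_unique _ _ h).symm

lemma supp_one : A.supp A.one = A.zero := by
  have h := A.add_supp A.one
  rw [A.comm] at h
  exact A.one_def _ _ h

lemma add_zero (a : E) : A.add a A.zero = some a := by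
  have h1 := A.add_supp (A.supp a)
  rw [A.supp_supp] at h1
  have h2 := A.add_supp A.one
  rw [A.supp_one] at h2
  obtain ⟨bc, hbc, habc⟩ := A.assoc _ _ _ _ _ h1 h2
  have : bc = A.supp (A.supp a) := A.supp_unique _ _ habc
  rw [A.supp_supp] at this
  rwa [this] at hbc

lemma le_refl (a : E) : A.le a a := ⟨A.zero, A.add_zero a⟩

lemma le_trans {a b c : E} (h1 : A.le a b) (h2 : A.le b c) : A.le a c := by
  obtain ⟨x, hx⟩ := h1
  obtain ⟨y, hy⟩ := h2
  obtain ⟨z, hz, haz⟩ := A.assoc _ _ _ _ _ hx hy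
  exact ⟨z, haz⟩

lemma supp_antitone {a b : E} (h : A.le a b) : A.le (A.supp b) (A.supp a) := by
  obtain ⟨x, hx⟩ := h
  have h1 := A.add_supp b
  obtain ⟨t, ht, hat⟩ := A.assoc _ _ _ _ _ hx h1
  have : t = A.supp a := A.supp_unique _ _ hat
  rw [this] at ht
  rw [A.comm] at ht
  exact ⟨x, ht⟩

lemma add_mono {x y z w : E} (h : A.le x y) (h' : A.add y z = some w) :
    ∃ v, A.add x z = some v ∧ A.le v w := by
  obtain ⟨u, hu⟩ := h
  obtain ⟨uz, huz, hxuz⟩ := A.assoc _ _ _ _ _ hu h'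
  rw [A.comm] at hxuz
  obtain ⟨zx, hzx, huzx⟩ := A.assoc _ _ _ _ _ huz hxuz
  rw [A.comm] at hzx huzx
  exact ⟨zx, hzx, ⟨u, huzx⟩⟩

end EffectAlgebra
namespace EffectAlgebra
variable {E : Type*} (A : EffectAlgebra E)

lemma exists_maximal_above (hACC : A.ACC) (S : Set E) {a : E} (ha : a ∈ S) :
    ∃ d ∈ S, A.le a d ∧ ∀ y ∈ S, A.le d y → d = y := by
  by_contra hcon
  push_neg at hcon
  have step : ∀ x : E, x ∈ S → A.le a x → ∃ y, y ∈ S ∧ A.le a y ∧ A.le x y ∧ x ≠ y := by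
    intro x hx hax
    obtain ⟨y, hy, hxy, hne⟩ := hcon x hx hax
    exact ⟨y, hy, A.le_trans hax hxy, hxy, hne⟩
  classical
  let T := {x : E // x ∈ S ∧ A.le a x}
  have nxt : ∀ t : T, ∃ t' : T, A.le t.1 t'.1 ∧ t.1 ≠ t'.1 := by
    intro ⟨x, hx, hax⟩
    obtain ⟨y, hy, hay, hxy, hne⟩ := step x hx hax
    exact ⟨⟨y, hy, hay⟩, hxy, hne⟩
  choose g hg1 hg2 using nxt
  let f : ℕ → T := fun n => g^[n] ⟨a, ha, A.le_refl a⟩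
  have hstep : ∀ n, f (n + 1) = g (f n) := fun n =>
    Function.iterate_succ_apply' g n _
  obtain ⟨n, hn⟩ := hACC (fun n => (f n).1) (by
    intro n
    show A.le (f n).1 (f (n+1)).1
    rw [hstep n]
    exact hg1 (f n))
  have hn' : (f n).1 = (f (n+1)).1 := hn
  rw [hstep n] at hn'
  exact hg2 (f n) hn'

end EffectAlgebra

open EffectAlgebra
theorem stmt12 {E : Type*} (A : EffectAlgebra E) (hACC : A.ACC) (a b c ab : E)
    (hab : A.dot a b = some ab) :
    A.le ab c ↔ ∃ d ∈ A.arrow b c, A.le a d := by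
  constructor
  · intro h
    have ha : a ∈ A.impSet b c := ⟨ab, hab, h⟩
    obtain ⟨d, hd, had, hmax⟩ := A.exists_maximal_above hACC _ ha
    exact ⟨d, ⟨hd, hmax⟩, had⟩
  · rintro ⟨d, ⟨⟨e, hde, hec⟩, -⟩, had⟩
    rw [dot, Option.map_eq_some_iff] at hab hde
    obtain ⟨t, ht, hts⟩ := hab
    obtain ⟨s, hs, hss⟩ := hde
    have hda : A.le (A.supp d) (A.supp a) := A.supp_antitone had
    obtain ⟨v, hv, hvt⟩ := A.add_mono hda ht
    have hvs : v = s := by rw [hv] at hs; exact (Option.some.injEq _ _).mp hs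
    subst hvs
    have : A.le (A.supp t) (A.supp v) := A.supp_antitone hvt
    rw [hts, hss] at this
    exact A.le_trans this hec
end

section
/- In an effect algebra, if a ⇝ b := a'+b is defined (i.e., b ≤ a), then the unsharp implication a → b := Max{x | x⊙a defined and x⊙a ≤ b} is the singleton {a'+b}. -/
namespace EffectAlgebra

variable {E : Type*} (A : EffectAlgebra E)

lemma supp_inj {a b : E} (h : A.supp a = A.supp b) : a = b := by
  have := congrArg A.supp h
  rwa [A.supp_supp, A.supp_supp] at this

lemma add_one_zero : A.add A.one A.zero = some A.one := by
  have h1 : A.add A.one (A.supp A.one) = some A.one := A.add_supp A.one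
  have h2 : A.add (A.supp A.one) A.one = some A.one := (A.comm _ _).symm ▸ h1
  have : A.supp A.one = A.zero := A.one_def _ _ h2
  rwa [this] at h1

lemma cancel {a b c v : E} (h1 : A.add a b = some v) (h2 : A.add a c = some v) :
    b = c := by
  have hb : A.add b a = some v := (A.comm b a).trans h1
  have hc : A.add c a = some v := (A.comm c a).trans h2
  obtain ⟨s, hs, hbs⟩ := A.assoc b a (A.supp v) v A.one hb (A.add_supp v)
  obtain ⟨t, ht, hct⟩ := A.assoc c a (A.supp v) v A.one hc (A.add_supp v)
  have hst : s = t := by rw [hs] at ht; exact Option.some.inj ht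
  have h3 : s = A.supp b := A.supp_unique b s hbs
  have h4 : t = A.supp c := A.supp_unique c t hct
  exact A.supp_inj (h3 ▸ h4 ▸ hst)

/-- if a+b=p, b+c=q, a+q=r then p+c=r -/
lemma reassoc {a b c p q r : E} (hab : A.add a b = some p)
    (hbc : A.add b c = some q) (haq : A.add a q = some r) :
    A.add p c = some r := by
  have hcb : A.add c b = some q := (A.comm c b).trans hbc
  have hqa : A.add q a = some r := (A.comm q a).trans haq
  obtain ⟨s, hs, hcs⟩ := A.assoc c b a q r hcb hqa
  have hs' : A.add a b = some s := (A.comm a b).symm ▸ hs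
  have : s = p := by rw [hab] at hs'; exact (Option.some.inj hs').symm
  rw [this] at hcs
  exact (A.comm p c).symm ▸ hcs

lemma add_eq_zero_left {a b : E} (h : A.add a b = some A.zero) : a = A.zero := by
  have hba : A.add b a = some A.zero := (A.comm b a).trans h
  have hz1 : A.add A.zero A.one = some A.one := (A.comm A.zero A.one).trans A.add_one_zero
  obtain ⟨s, hs, has⟩ := A.assoc b a A.one A.zero A.one hba hz1
  have := A.one_def a s hs
  -- this : a = zero
  exact this

lemma le_antisymm {x y : E} (h1 : A.le x y) (h2 : A.le y x) : x = y := by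
  obtain ⟨c, hc⟩ := h1
  obtain ⟨c2, hc2⟩ := h2
  obtain ⟨s, hs, hxs⟩ := A.assoc x c c2 y x hc hc2
  have hx0 : A.add x A.zero = some x := A.add_zero x
  have : s = A.zero := A.cancel hxs hx0
  rw [this] at hs
  have : c = A.zero := A.add_eq_zero_left hs
  rw [this] at hc
  rw [A.add_zero x] at hc
  exact Option.some.inj hc

end EffectAlgebra

open EffectAlgebra
theorem stmt16 {E : Type*} (A : EffectAlgebra E) (a b d : E)
    (hd : A.add (A.supp a) b = some d) :
    A.arrow a b = {d} := by
  -- Step A: b + d' = a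
  obtain ⟨s, hs, has⟩ := A.assoc (A.supp a) b (A.supp d) d A.one hd (A.add_supp d)
  have hsa : s = A.supp (A.supp a) := A.supp_unique _ _ has
  rw [A.supp_supp] at hsa
  rw [hsa] at hs
  -- hs : add b (supp d) = some a
  -- Step B: d' + a' = b'
  obtain ⟨t, ht, hbt⟩ := A.assoc b (A.supp d) (A.supp a) a A.one hs (A.add_supp a)
  have htb : t = A.supp b := A.supp_unique _ _ hbt
  rw [htb] at ht
  -- ht : add (supp d) (supp a) = some (supp b)
  have hdot : A.dot d a = some b := by
    unfold dot
    rw [ht, Option.map_some, A.supp_supp]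
  have hdmem : d ∈ A.impSet a b := ⟨b, hdot, ⟨A.zero, A.add_zero b⟩⟩
  -- every x in impSet satisfies x ≤ d
  have hmax : ∀ x ∈ A.impSet a b, A.le x d := by
    rintro x ⟨e, hxe, c, hc⟩
    unfold dot at hxe
    obtain ⟨m, hm, hme⟩ := Option.map_eq_some_iff.mp hxe
    have hmse : m = A.supp e := by
      have := congrArg A.supp hme
      rwa [A.supp_supp] at this
    rw [hmse] at hm
    -- hm : add (supp x) (supp a) = some (supp e)
    have hse : A.add (A.supp e) e = some A.one := (A.comm _ _).trans (A.add_supp e)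
    obtain ⟨u, hu, hxu⟩ := A.assoc (A.supp x) (A.supp a) e (A.supp e) A.one hm hse
    have hux : u = A.supp (A.supp x) := A.supp_unique _ _ hxu
    rw [A.supp_supp] at hux
    rw [hux] at hu
    -- hu : add (supp a) e = some x
    -- hc : add e c = some b ; hd : add (supp a) b = some d
    obtain ⟨v, hv, hev⟩ := A.assoc e c (A.supp a) b d hc ((A.comm b (A.supp a)).symm ▸ hd)
    -- hv : add c (supp a) = some v ; hev : add e v = some d
    have hea : A.add e (A.supp a) = some x := (A.comm e (A.supp a)).symm ▸ hu
    have hav : A.add (A.supp a) c = some v := (A.comm (A.supp a) c).symm ▸ hv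
    exact ⟨c, A.reassoc hea hav hev⟩
  ext x
  simp only [Set.mem_singleton_iff]
  constructor
  · rintro ⟨hx, hmaxx⟩
    exact hmaxx d hdmem (hmax x hx)
  · rintro rfl
    exact ⟨hdmem, fun y hy hdy => A.le_antisymm hdy (hmax y hy)⟩
end

section
/- In an effect algebra satisfying the ACC, define b ⇒ c := {b'+d | d ∈ Max L(b,c)}, where L(b,c) is the set of common lower bounds of b and c (note b'+d is defined since d ≤ b). Then a ⇒ b = {1} if and only if a ≤ b, and a ⇒ 0 = {a'}, 1 ⇒ a = {a}. -/
open EffectAlgebra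

section Helpers

variable {E : Type*} (A : EffectAlgebra E)

lemma supp_one' : A.supp A.one = A.zero := by
  have h := A.add_supp A.one
  rw [A.comm] at h
  exact A.one_def _ _ h

lemma add_one_zero' : A.add A.one A.zero = some A.one := by
  have h := A.add_supp A.one
  rwa [supp_one' A] at h

lemma supp_supp' (a : E) : A.supp (A.supp a) = a := by
  have h := A.add_supp a
  rw [A.comm] at h
  exact (A.supp_unique _ _ h).symm

lemma add_zero' (a : E) : A.add a A.zero = some a := by
  have h := A.add_supp a
  rw [A.comm] at h
  obtain ⟨bc, hbc, hone⟩ := A.assoc _ _ _ _ _ h (add_one_zero' A)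
  have : bc = A.supp (A.supp a) := A.supp_unique _ _ hone
  rw [this, supp_supp'] at hbc
  exact hbc

lemma eq_zero_of_add_self' {a x : E} (h : A.add a x = some a) : x = A.zero := by
  rw [A.comm] at h
  obtain ⟨bc, hbc, hone⟩ := A.assoc _ _ _ _ _ h (A.add_supp a)
  rw [A.add_supp a] at hbc
  have : A.one = bc := Option.some_injective _ hbc
  rw [← this] at hone
  exact A.one_def _ _ hone

lemma eq_zero_of_add_eq_zero' {c d : E} (h : A.add c d = some A.zero) : c = A.zero := by
  have h01 : A.add A.zero A.one = some A.one := by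
    rw [A.comm]; exact add_one_zero' A
  obtain ⟨bc, hbc, hone⟩ := A.assoc _ _ _ _ _ h h01
  have hd : d = A.zero := A.one_def _ _ hbc
  rw [hd, h01] at hbc
  have : A.one = bc := Option.some_injective _ hbc
  rw [← this] at hone
  exact A.one_def _ _ hone

lemma le_refl' (a : E) : A.le a a := ⟨A.zero, add_zero' A a⟩

lemma zeroLe' (a : E) : A.le A.zero a := by
  refine ⟨a, ?_⟩
  rw [A.comm]; exact add_zero' A a

lemma le_one' (a : E) : A.le a A.one := ⟨A.supp a, A.add_supp a⟩

lemma le_zero' {a : E} (h : A.le a A.zero) : a = A.zero := by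
  obtain ⟨c, hc⟩ := h
  exact eq_zero_of_add_eq_zero' A hc

lemma le_antisymm' {a b : E} (hab : A.le a b) (hba : A.le b a) : a = b := by
  obtain ⟨c, hc⟩ := hab
  obtain ⟨d, hd⟩ := hba
  obtain ⟨cd, hcd, hacd⟩ := A.assoc _ _ _ _ _ hc hd
  have hcd0 : cd = A.zero := eq_zero_of_add_self' A hacd
  rw [hcd0] at hcd
  have hc0 : c = A.zero := eq_zero_of_add_eq_zero' A hcd
  rw [hc0, add_zero'] at hc
  exact Option.some_injective _ hc

end Helpers

theorem stmt18 {E : Type*} (A : EffectAlgebra E) (hACC : A.ACC) (a b : E) :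
    (A.darr a b = {A.one} ↔ A.le a b) ∧
    A.darr a A.zero = {A.supp a} ∧
    A.darr A.one b = {b} := by
  refine ⟨⟨?_, ?_⟩, ?_, ?_⟩
  · -- darr a b = {1} → a ≤ b
    intro h
    have h1 : A.one ∈ A.darr a b := by rw [h]; rfl
    obtain ⟨d, ⟨⟨hda, hdb⟩, _⟩, hadd⟩ := h1
    have : d = A.supp (A.supp a) := A.supp_unique _ _ hadd
    rw [this, supp_supp'] at hdb
    exact hdb
  · -- a ≤ b → darr a b = {1}
    intro hab
    have hamax : a ∈ A.maxLb a b := by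
      refine ⟨⟨le_refl' A a, hab⟩, ?_⟩
      intro y ⟨hya, _⟩ hay
      exact le_antisymm' A hay hya
    ext e
    simp only [Set.mem_singleton_iff]
    constructor
    · rintro ⟨d, ⟨hdlb, hdmax⟩, hadd⟩
      have hda : d = a := hdmax a ⟨le_refl' A a, hab⟩ hdlb.1
      rw [hda, A.comm, A.add_supp] at hadd
      exact (Option.some_injective _ hadd).symm
    · rintro rfl
      refine ⟨a, hamax, ?_⟩
      rw [A.comm]; exact A.add_supp a
  · -- darr a 0 = {a'}
    have hmax : A.maxLb a A.zero = {A.zero} := by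
      ext x
      simp only [Set.mem_singleton_iff]
      constructor
      · rintro ⟨⟨_, hx0⟩, _⟩
        exact le_zero' A hx0
      · rintro rfl
        exact ⟨⟨zeroLe' A a, le_refl' A _⟩, fun y ⟨_, hy0⟩ _ => (le_zero' A hy0).symm⟩
    ext e
    simp only [darr, hmax, Set.mem_singleton_iff, Set.mem_setOf_eq]
    constructor
    · rintro ⟨d, rfl, hadd⟩
      rw [add_zero'] at hadd
      exact (Option.some_injective _ hadd).symm
    · rintro rfl
      exact ⟨A.zero, rfl, add_zero' A _⟩
  · -- darr 1 b = {b}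
    have hmax : A.maxLb A.one b = {b} := by
      ext x
      simp only [Set.mem_singleton_iff]
      constructor
      · rintro ⟨⟨_, hxb⟩, hm⟩
        exact hm b ⟨le_one' A b, le_refl' A b⟩ hxb
      · rintro rfl
        exact ⟨⟨le_one' A _, le_refl' A _⟩,
          fun y ⟨_, hyb⟩ hby => le_antisymm' A hby hyb⟩
    ext e
    simp only [darr, hmax, Set.mem_singleton_iff, Set.mem_setOf_eq]
    constructor
    · rintro ⟨d, rfl, hadd⟩
      rw [supp_one', A.comm, add_zero'] at hadd
      exact (Option.some_injective _ hadd).symm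
    · rintro rfl
      refine ⟨_, rfl, ?_⟩
      rw [supp_one', A.comm]; exact add_zero' A _
end
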